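/- Let C be a v×v real symmetric positive semidefinite matrix, let W be a v×v real symmetric positive definite matrix, let P be the orthogonal projection matrix onto the column space of C, and set R = ((P W^{−1} P)⁺)^{1/2}, the positive semidefinite square root of the Moore–Penrose pseudoinverse of P W^{−1} P. Then the v×v matrices M = W^{−1/2} C W^{−1/2} and N = (R C⁺ R)⁺ have the same eigenvalues including multiplicities; that is, for every real λ, the dimension of the kernel of M − λ·I_v equals the dimension of the kernel of N − λ·I_v. -/

import Mathlib

/-!
Put `S = W^{-1/2}` and `A = P W⁻¹ P = (P S)(P S)ᵀ`. Then `C(A) = C(P) = C(C)`, so `A A⁺ = C C⁺ = P`,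
and `R A R = P` since `R² = A⁺`; from this one checks directly that `N = R A C A R`. Writing
`C = X Xᵀ`, both `M = (S X)(S X)ᵀ` and `N = (R A X)(R A X)ᵀ` are of the form `Y Yᵀ` with the same
Gram matrix `Yᵀ Y = Xᵀ W⁻¹ X`. Now `Y Yᵀ` and `Yᵀ Y` have the same nonzero eigenvalues with the
same multiplicities, and the kernel of `Y Yᵀ` has dimension `v - rank (Yᵀ Y)`.
-/

open Matrix

/-- The column space of a real matrix. -/
def colSpace {m n : ℕ} (A : Matrix (Fin m) (Fin n) ℝ) : Submodule ℝ (Fin m → ℝ) :=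
  LinearMap.range A.mulVecLin

/-- `B` is the Moore–Penrose pseudoinverse of `A`. -/
def IsMPInv {m n : ℕ} (A : Matrix (Fin m) (Fin n) ℝ) (B : Matrix (Fin n) (Fin m) ℝ) : Prop :=
  A * B * A = A ∧ B * A * B = B ∧ (A * B)ᵀ = A * B ∧ (B * A)ᵀ = B * A

section ColumnSpace

variable {l m n : ℕ}

lemma colSpace_mul_le (A : Matrix (Fin m) (Fin n) ℝ) (B : Matrix (Fin n) (Fin l) ℝ) :
    colSpace (A * B) ≤ colSpace A := by
  rw [colSpace, colSpace, mulVecLin_mul]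
  exact LinearMap.range_comp_le_range _ _

lemma colSpace_eq_of_le_of_rank_eq {A : Matrix (Fin m) (Fin n) ℝ} {B : Matrix (Fin m) (Fin l) ℝ}
    (hle : colSpace A ≤ colSpace B) (hrank : A.rank = B.rank) : colSpace A = colSpace B :=
  Submodule.eq_of_le_of_finrank_eq hle hrank

lemma colSpace_mul_of_isUnit_det (A : Matrix (Fin m) (Fin n) ℝ) {B : Matrix (Fin n) (Fin n) ℝ}
    (hB : IsUnit B.det) : colSpace (A * B) = colSpace A :=
  colSpace_eq_of_le_of_rank_eq (colSpace_mul_le A B) (rank_mul_eq_left_of_isUnit_det B A hB)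

lemma colSpace_mul_transpose_self (X : Matrix (Fin m) (Fin n) ℝ) :
    colSpace (X * Xᵀ) = colSpace X :=
  colSpace_eq_of_le_of_rank_eq (colSpace_mul_le X Xᵀ) (rank_self_mul_transpose X)

lemma mul_eq_self_of_colSpace_le {E : Matrix (Fin m) (Fin m) ℝ} {A : Matrix (Fin m) (Fin n) ℝ}
    {B : Matrix (Fin m) (Fin l) ℝ} (hEA : E * A = A) (hle : colSpace B ≤ colSpace A) :
    E * B = B := by
  refine ext_of_mulVec_single fun j => ?_
  obtain ⟨y, hy⟩ := hle ⟨Pi.single j 1, rfl⟩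
  have hy : A *ᵥ y = B *ᵥ Pi.single j 1 := hy
  rw [← mulVec_mulVec, ← hy, mulVec_mulVec, hEA]

lemma mul_eq_self_of_mul_mul_transpose_eq {E : Matrix (Fin m) (Fin m) ℝ}
    {X : Matrix (Fin m) (Fin n) ℝ} (h : E * (X * Xᵀ) = X * Xᵀ) : E * X = X :=
  mul_eq_self_of_colSpace_le h (colSpace_mul_transpose_self X).ge

end ColumnSpace

namespace IsMPInv

section Rectangular

variable {m n : ℕ} {A : Matrix (Fin m) (Fin n) ℝ} {B B' : Matrix (Fin n) (Fin m) ℝ}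

lemma transpose (h : IsMPInv A B) : IsMPInv Aᵀ Bᵀ := by
  obtain ⟨h₁, h₂, h₃, h₄⟩ := h
  refine ⟨?_, ?_, ?_, ?_⟩
  · rw [← transpose_mul, ← transpose_mul, ← Matrix.mul_assoc, h₁]
  · rw [← transpose_mul, ← transpose_mul, ← Matrix.mul_assoc, h₂]
  · rw [← transpose_mul, h₄, h₄]
  · rw [← transpose_mul, h₃, h₃]

lemma unique (h : IsMPInv A B) (h' : IsMPInv A B') : B = B' := by
  obtain ⟨h₁, h₂, h₃, h₄⟩ := h
  obtain ⟨h₁', h₂', h₃', h₄'⟩ := h'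
  have hAB : A * B = A * B' :=
    calc A * B = (A * B' * (A * B))ᵀ := by rw [← Matrix.mul_assoc, h₁', h₃]
      _ = A * B * (A * B') := by rw [transpose_mul, h₃, h₃']
      _ = A * B' := by rw [← Matrix.mul_assoc, h₁]
  have hBA : B * A = B' * A :=
    calc B * A = (B * A * (B' * A))ᵀ := by
          rw [Matrix.mul_assoc B A, ← Matrix.mul_assoc A B' A, h₁', h₄]
      _ = B' * A * (B * A) := by rw [transpose_mul, h₄, h₄']
      _ = B' * A := by rw [Matrix.mul_assoc B' A, ← Matrix.mul_assoc A B A, h₁]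
  calc B = B' * A * B := by rw [← hBA, h₂]
    _ = B' := by rw [Matrix.mul_assoc, hAB, ← Matrix.mul_assoc, h₂']

lemma colSpace_mul (h : IsMPInv A B) : colSpace (A * B) = colSpace A :=
  (colSpace_mul_le A B).antisymm <| by
    conv_lhs => rw [← h.1]
    exact colSpace_mul_le (A * B) A

lemma mul_eq_of_colSpace_eq (h : IsMPInv A B) {P : Matrix (Fin m) (Fin m) ℝ} (hP : P.IsSymm)
    (hPP : P * P = P) (hcol : colSpace P = colSpace A) : A * B = P := by
  have hPA : P * A = A := mul_eq_self_of_colSpace_le hPP hcol.ge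
  have hABP : A * B * P = P := mul_eq_self_of_colSpace_le h.1 hcol.le
  calc A * B = P * (A * B) := by rw [← Matrix.mul_assoc, hPA]
    _ = P := by rw [← hP.eq, ← h.2.2.1, ← transpose_mul, hABP]

end Rectangular

section Square

variable {n : ℕ} {A B G R : Matrix (Fin n) (Fin n) ℝ}

lemma isSymm (hA : A.IsSymm) (h : IsMPInv A B) : B.IsSymm :=
  (hA.eq ▸ h.transpose).unique h

lemma mul_comm (hA : A.IsSymm) (h : IsMPInv A B) : B * A = A * B := by
  rw [← h.2.2.1, transpose_mul, hA.eq, (h.isSymm hA).eq]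

lemma of_mul_eq {K N P : Matrix (Fin n) (Fin n) ℝ} (hKN : K * N = P) (hNK : N * K = P)
    (hP : P.IsSymm) (hPK : P * K = K) (hPN : P * N = N) : IsMPInv K N :=
  ⟨by rw [hKN, hPK], by rw [hNK, hPN], by rw [hKN, hP.eq], by rw [hNK, hP.eq]⟩

/-- `C(R) = C(R Rᵀ) = C(A⁺)` lies in the range of the projection `A A⁺`. -/
lemma mul_mul_sqrt (hA : A.IsSymm) (hG : IsMPInv A G) (hR : R.IsSymm) (hRG : R * R = G) :
    A * G * R = R := by
  refine mul_eq_self_of_mul_mul_transpose_eq ?_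
  rw [hR.eq, hRG, ← hG.mul_comm hA, hG.2.1]

lemma sqrt_mul_mul (hA : A.IsSymm) (hG : IsMPInv A G) (hR : R.IsSymm) (hRG : R * R = G) :
    R * (A * G) = R := by
  rw [← hR.eq, ← hG.2.2.1, ← transpose_mul, hG.mul_mul_sqrt hA hR hRG]

lemma sqrt_mul_mul_sqrt (hA : A.IsSymm) (hG : IsMPInv A G) (hR : R.IsSymm) (hRG : R * R = G) :
    R * A * R = A * G := by
  have hPR := hG.mul_mul_sqrt hA hR hRG
  have hRP := hG.sqrt_mul_mul hA hR hRG
  have hker : (A * G - R * A * R) * R = 0 := by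
    rw [sub_mul, hPR, Matrix.mul_assoc (R * A), hRG, Matrix.mul_assoc, hRP, sub_self]
  have hdiff : A * G - R * A * R = 0 :=
    calc A * G - R * A * R = (A * G - R * A * R) * (A * G) := by
          rw [sub_mul, ← Matrix.mul_assoc, hG.1, Matrix.mul_assoc _ R, hRP]
      _ = (A * G - R * A * R) * R * (R * A) := by
          rw [← hG.mul_comm hA, ← hRG]
          simp only [Matrix.mul_assoc]
      _ = 0 := by rw [hker, zero_mul]
  exact (sub_eq_zero.mp hdiff).symm

lemma sqrt_mul_pinv_mul_sqrt {C Cp : Matrix (Fin n) (Fin n) ℝ} (hA : A.IsSymm) (hG : IsMPInv A G)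
    (hR : R.IsSymm) (hRG : R * R = G) (hC : C.IsSymm) (hCp : IsMPInv C Cp)
    (hcol : colSpace A = colSpace C) : IsMPInv (R * Cp * R) (R * A * C * A * R) := by
  have hP : (A * G).IsSymm := hG.2.2.1
  have hPP : A * G * (A * G) = A * G := by rw [← Matrix.mul_assoc, hG.1]
  have hCCp : C * Cp = A * G := hCp.mul_eq_of_colSpace_eq hP hPP (hG.colSpace_mul.trans hcol)
  have hCpC : Cp * C = A * G := (hCp.mul_comm hC).trans hCCp
  have hPC : A * G * C = C := by rw [← hCCp, hCp.1]
  have hCP : C * (A * G) = C := by rw [← hCpC, ← Matrix.mul_assoc, hCp.1]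
  have hPR := hG.mul_mul_sqrt hA hR hRG
  have hRP := hG.sqrt_mul_mul hA hR hRG
  have hRAR := hG.sqrt_mul_mul_sqrt hA hR hRG
  refine of_mul_eq ?_ ?_ hP (by simp only [← Matrix.mul_assoc, hPR])
    (by simp only [← Matrix.mul_assoc, hPR])
  · calc R * Cp * R * (R * A * C * A * R) = R * Cp * (R * R * A * C) * A * R := by
          simp only [Matrix.mul_assoc]
      _ = R * (Cp * C) * A * R := by
          rw [hRG, hG.mul_comm hA, hPC, Matrix.mul_assoc R Cp C]
      _ = A * G := by rw [hCpC, hRP, hRAR]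
  · calc R * A * C * A * R * (R * Cp * R) = R * A * (C * (A * (R * R)) * Cp) * R := by
          simp only [Matrix.mul_assoc]
      _ = R * A * (C * Cp) * R := by rw [hRG, hCP]
      _ = A * G := by rw [hCCp, Matrix.mul_assoc, hPR, hRAR]

end Square

end IsMPInv

section Eigenspace

variable {K : Type*} [Field K] {m n : Type*} [Fintype m] [Fintype n]

lemma mem_ker_sub_smul_one_mulVecLin [DecidableEq n] {A : Matrix n n K} {μ : K} {u : n → K} :
    u ∈ LinearMap.ker (A - μ • 1).mulVecLin ↔ A *ᵥ u = μ • u := by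
  rw [LinearMap.mem_ker, mulVecLin_apply, sub_mulVec, smul_mulVec, one_mulVec, sub_eq_zero]

/-- `u ↦ B u` embeds the `μ`-eigenspace of `A B` into that of `B A`: for `μ ≠ 0`, `B u = 0`
forces `μ u = A B u = 0`. -/
lemma finrank_ker_mul_sub_smul_le [DecidableEq m] [DecidableEq n] (A : Matrix m n K)
    (B : Matrix n m K) {μ : K} (hμ : μ ≠ 0) :
    Module.finrank K (LinearMap.ker (A * B - μ • 1).mulVecLin) ≤
      Module.finrank K (LinearMap.ker (B * A - μ • 1).mulVecLin) := by
  have hmaps : ∀ u ∈ LinearMap.ker (A * B - μ • 1).mulVecLin,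
      B.mulVecLin u ∈ LinearMap.ker (B * A - μ • 1).mulVecLin := by
    intro u hu
    rw [mem_ker_sub_smul_one_mulVecLin] at hu ⊢
    rw [mulVecLin_apply, ← mulVec_mulVec, mulVec_mulVec u A B, hu, mulVec_smul]
  refine LinearMap.finrank_le_finrank_of_injective (f := B.mulVecLin.restrict hmaps) ?_
  rw [← LinearMap.ker_eq_bot, LinearMap.ker_eq_bot']
  rintro ⟨u, hu⟩ hBu
  have hBu : B *ᵥ u = 0 := congrArg Subtype.val hBu
  rw [mem_ker_sub_smul_one_mulVecLin, ← mulVec_mulVec, hBu, mulVec_zero] at hu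
  exact Subtype.ext (smul_eq_zero.mp hu.symm |>.resolve_left hμ)

lemma finrank_ker_mul_sub_smul_comm [DecidableEq m] [DecidableEq n] (A : Matrix m n K)
    (B : Matrix n m K) {μ : K} (hμ : μ ≠ 0) :
    Module.finrank K (LinearMap.ker (A * B - μ • 1).mulVecLin) =
      Module.finrank K (LinearMap.ker (B * A - μ • 1).mulVecLin) :=
  (finrank_ker_mul_sub_smul_le A B hμ).antisymm (finrank_ker_mul_sub_smul_le B A hμ)

variable [LinearOrder K] [IsStrictOrderedRing K]

lemma finrank_ker_mul_transpose_self_add_rank (X : Matrix m n K) :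
    Module.finrank K (LinearMap.ker (X * Xᵀ).mulVecLin) + X.rank = Fintype.card m := by
  have hker := ker_mulVecLin_transpose_mul_self Xᵀ
  rw [transpose_transpose] at hker
  rw [hker, ← rank_transpose, add_comm, rank, LinearMap.finrank_range_add_finrank_ker,
    Module.finrank_fintype_fun_eq_card]

lemma finrank_ker_mul_transpose_sub_smul_eq [DecidableEq m] [DecidableEq n]
    {X Y : Matrix m n K} (h : Xᵀ * X = Yᵀ * Y) (μ : K) :
    Module.finrank K (LinearMap.ker (X * Xᵀ - μ • 1).mulVecLin) =
      Module.finrank K (LinearMap.ker (Y * Yᵀ - μ • 1).mulVecLin) := by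
  rcases eq_or_ne μ 0 with rfl | hμ
  · have hrank : X.rank = Y.rank := by
      rw [← rank_transpose_mul_self X, h, rank_transpose_mul_self]
    have hX := finrank_ker_mul_transpose_self_add_rank X
    have hY := finrank_ker_mul_transpose_self_add_rank Y
    rw [zero_smul, sub_zero, sub_zero]
    omega
  · rw [finrank_ker_mul_sub_smul_comm X _ hμ, finrank_ker_mul_sub_smul_comm Y _ hμ, h]

end Eigenspace

open scoped MatrixOrder in
lemma Matrix.PosSemidef.exists_mul_transpose_self_eq {n : Type*} [Fintype n] [DecidableEq n]
    {C : Matrix n n ℝ} (hC : C.PosSemidef) : ∃ X : Matrix n n ℝ, X * Xᵀ = C := by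
  refine ⟨CFC.sqrt C, ?_⟩
  rw [← conjTranspose_eq_transpose_of_trivial, (CFC.sqrt_nonneg C).posSemidef.isHermitian.eq,
    CFC.sqrt_mul_sqrt_self C hC.nonneg]

theorem stmt1_general (v : ℕ) (C W : Matrix (Fin v) (Fin v) ℝ) (hC : C.PosSemidef)
    (P : Matrix (Fin v) (Fin v) ℝ) (hPsymm : Pᵀ = P) (hPidem : P * P = P)
    (hPrange : colSpace P = colSpace C)
    (Cp G : Matrix (Fin v) (Fin v) ℝ) (hCp : IsMPInv C Cp)
    (hG : IsMPInv (P * W⁻¹ * P) G)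
    (R : Matrix (Fin v) (Fin v) ℝ) (hR : R.PosSemidef) (hRG : R * R = G)
    (Wsq : Matrix (Fin v) (Fin v) ℝ) (hWsq : Wsq.PosDef) (hWsqW : Wsq * Wsq = W)
    (N : Matrix (Fin v) (Fin v) ℝ) (hN : IsMPInv (R * Cp * R) N) :
    ∀ μ : ℝ,
      Module.finrank ℝ (LinearMap.ker ((Wsq⁻¹ * C * Wsq⁻¹ - μ • 1).mulVecLin)) =
        Module.finrank ℝ (LinearMap.ker ((N - μ • 1).mulVecLin)) := by
  intro μ
  set A := P * W⁻¹ * P with hAdef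
  have hS : Wsq⁻¹.IsSymm := (isHermitian_iff_isSymm.mp hWsq.isHermitian).inv
  have hWinv : W⁻¹ = Wsq⁻¹ * Wsq⁻¹ := by rw [← hWsqW, Matrix.mul_inv_rev]
  have hAgram : A = P * Wsq⁻¹ * (P * Wsq⁻¹)ᵀ := by
    rw [hAdef, hWinv, transpose_mul, hS.eq, hPsymm]
    simp only [Matrix.mul_assoc]
  have hA : A.IsSymm := hAgram ▸ isSymm_mul_transpose_self _
  have hRsymm : R.IsSymm := isHermitian_iff_isSymm.mp hR.isHermitian
  have hcol : colSpace A = colSpace C := by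
    rw [hAgram, colSpace_mul_transpose_self,
      colSpace_mul_of_isUnit_det _ ((isUnit_iff_isUnit_det _).mp hWsq.inv.isUnit), hPrange]
  have hNeq : N = R * A * C * A * R :=
    hN.unique (hG.sqrt_mul_pinv_mul_sqrt hA hRsymm hRG (isHermitian_iff_isSymm.mp hC.isHermitian)
      hCp hcol)
  obtain ⟨X, rfl⟩ := hC.exists_mul_transpose_self_eq
  have hPX : P * X = X :=
    mul_eq_self_of_mul_mul_transpose_eq (mul_eq_self_of_colSpace_le hPidem hPrange.ge)
  have hMX : Wsq⁻¹ * (X * Xᵀ) * Wsq⁻¹ = Wsq⁻¹ * X * (Wsq⁻¹ * X)ᵀ := by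
    rw [transpose_mul, hS.eq]
    simp only [Matrix.mul_assoc]
  have hNX : N = R * A * X * (R * A * X)ᵀ := by
    rw [hNeq, transpose_mul, transpose_mul, hA.eq, hRsymm.eq]
    simp only [Matrix.mul_assoc]
  have hgram : (R * A * X)ᵀ * (R * A * X) = (Wsq⁻¹ * X)ᵀ * (Wsq⁻¹ * X) :=
    calc (R * A * X)ᵀ * (R * A * X) = Xᵀ * (A * (R * R) * A) * X := by
          rw [transpose_mul, transpose_mul, hA.eq, hRsymm.eq]
          simp only [Matrix.mul_assoc]
      _ = (P * X)ᵀ * W⁻¹ * (P * X) := by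
          rw [hRG, hG.1, hAdef, transpose_mul, hPsymm]
          simp only [Matrix.mul_assoc]
      _ = (Wsq⁻¹ * X)ᵀ * (Wsq⁻¹ * X) := by
          rw [hPX, hWinv, transpose_mul, hS.eq]
          simp only [Matrix.mul_assoc]
  rw [hMX, hNX]
  exact finrank_ker_mul_transpose_sub_smul_eq hgram.symm μ

theorem stmt1 (v : ℕ) (C W : Matrix (Fin v) (Fin v) ℝ) (hC : C.PosSemidef) (hW : W.PosDef)
    (P : Matrix (Fin v) (Fin v) ℝ) (hPsymm : Pᵀ = P) (hPidem : P * P = P)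
    (hPrange : colSpace P = colSpace C)
    (Cp G : Matrix (Fin v) (Fin v) ℝ) (hCp : IsMPInv C Cp)
    (hG : IsMPInv (P * W⁻¹ * P) G)
    (R : Matrix (Fin v) (Fin v) ℝ) (hR : R.PosSemidef) (hRG : R * R = G)
    (Wsq : Matrix (Fin v) (Fin v) ℝ) (hWsq : Wsq.PosDef) (hWsqW : Wsq * Wsq = W)
    (N : Matrix (Fin v) (Fin v) ℝ) (hN : IsMPInv (R * Cp * R) N) :
    ∀ μ : ℝ,
      Module.finrank ℝ (LinearMap.ker ((Wsq⁻¹ * C * Wsq⁻¹ - μ • 1).mulVecLin)) =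
        Module.finrank ℝ (LinearMap.ker ((N - μ • 1).mulVecLin)) :=
  stmt1_general v C W hC P hPsymm hPidem hPrange Cp G hCp hG R hR hRG Wsq hWsq hWsqW N hN
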